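/- arXiv:2302.11735 — 3 statements merged into one kernel-verified Lean document; each statement's English description precedes it below -/
import Mathlib

section
/- Let Ω ⊂ ℝ^d be a bounded open set and let F : ℝ^d → ℝ^d be smooth on an open neighborhood of the closure of Ω. Suppose that F has no zeros on the boundary of Ω, and that the zero set {x ∈ Ω : F(x) = 0} is finite and nondegenerate, i.e., the Fréchet derivative DF(x) is invertible at every x ∈ Ω with F(x) = 0. Then there exists ε > 0 such that for every smooth map F̂ : Ω → ℝ^d satisfying sup_{x ∈ Ω} ‖F(x) − F̂(x)‖ + sup_{x ∈ Ω} ‖DF(x) − DF̂(x)‖ < ε, the zero set {x ∈ Ω : F̂(x) = 0} is nondegenerate (DF̂ invertible at each zero) and has the same (finite) number of points as {x ∈ Ω : F(x) = 0}. -/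
open Set Metric
open scoped NNReal Topology

set_option maxHeartbeats 1000000

/-- Local abbreviation. -/
abbrev EucSp (d : ℕ) := EuclideanSpace ℝ (Fin d)

/-- A continuous linear endomorphism close to an invertible one is invertible. -/
lemma exists_cle_of_close {E : Type*} [NormedAddCommGroup E] [NormedSpace ℝ E] [CompleteSpace E]
    (L : E ≃L[ℝ] E) (g : E →L[ℝ] E)
    (h : ‖g - (L : E →L[ℝ] E)‖ < ‖(L.symm : E →L[ℝ] E)‖⁻¹) :
    ∃ L' : E ≃L[ℝ] E, (L' : E →L[ℝ] E) = g := by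
  have h' : ‖g - ((L.toUnit : (E →L[ℝ] E)ˣ) : E →L[ℝ] E)‖
      < ‖((L.toUnit⁻¹ : (E →L[ℝ] E)ˣ) : E →L[ℝ] E)‖⁻¹ := h
  exact ⟨ContinuousLinearEquiv.ofUnit (Units.ofNearby L.toUnit g h'), rfl⟩

/-- Positive separation of a finite set. -/
lemma finite_sep {α : Type*} [MetricSpace α] {s : Set α} (hs : s.Finite) :
    ∃ δ > 0, ∀ x ∈ s, ∀ y ∈ s, x ≠ y → δ ≤ dist x y := by
  classical
  set T := (hs.toFinset ×ˢ hs.toFinset).filter (fun p => p.1 ≠ p.2) with hT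
  rcases T.eq_empty_or_nonempty with h | h
  · refine ⟨1, one_pos, fun x hx y hy hxy => absurd ?_ (Finset.notMem_empty (x, y))⟩
    rw [← h, hT]
    simp [Finset.mem_filter, hs.mem_toFinset, hx, hy, hxy]
  · obtain ⟨p, hp, hmin⟩ := T.exists_min_image (fun p => dist p.1 p.2) h
    rw [hT, Finset.mem_filter] at hp
    refine ⟨dist p.1 p.2, dist_pos.2 hp.2, fun x hx y hy hxy => ?_⟩
    exact hmin (x, y) (by rw [hT]; simp [Finset.mem_filter, hs.mem_toFinset, hx, hy, hxy])



/-- Stability of nondegenerate zero sets under `C¹`-small perturbations: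
if `F` is smooth near the closure of a bounded open set `Ω ⊆ ℝ^d`, has no zeros
on the boundary of `Ω`, and its zero set in `Ω` is finite and nondegenerate,
then every smooth map `F̂` that is `C¹`-close to `F` on `Ω` has a nondegenerate
zero set in `Ω` with the same number of points. -/
theorem stability_of_nondegenerate_zeros
    (d : ℕ) (Ω : Set (EuclideanSpace ℝ (Fin d)))
    (hΩo : IsOpen Ω) (hΩb : Bornology.IsBounded Ω)
    (F : EuclideanSpace ℝ (Fin d) → EuclideanSpace ℝ (Fin d))
    (U : Set (EuclideanSpace ℝ (Fin d)))
    (hU : IsOpen U) (hclU : closure Ω ⊆ U)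
    (hF : ContDiffOn ℝ (⊤ : ℕ∞) F U)
    (hbd : ∀ x ∈ frontier Ω, F x ≠ 0)
    (hfin : {x ∈ Ω | F x = 0}.Finite)
    (hnd : ∀ x ∈ Ω, F x = 0 →
      ∃ L : EuclideanSpace ℝ (Fin d) ≃L[ℝ] EuclideanSpace ℝ (Fin d),
        HasFDerivAt F (L : EuclideanSpace ℝ (Fin d) →L[ℝ] EuclideanSpace ℝ (Fin d)) x) :
    ∃ ε : ℝ, 0 < ε ∧
      ∀ Fhat : EuclideanSpace ℝ (Fin d) → EuclideanSpace ℝ (Fin d),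
        ContDiffOn ℝ (⊤ : ℕ∞) Fhat Ω →
        (∃ a b : ℝ, a + b < ε ∧
          (∀ x ∈ Ω, ‖F x - Fhat x‖ ≤ a) ∧
          (∀ x ∈ Ω, ‖fderiv ℝ F x - fderiv ℝ Fhat x‖ ≤ b)) →
        ({x ∈ Ω | Fhat x = 0}.Finite ∧
          {x ∈ Ω | Fhat x = 0}.ncard = {x ∈ Ω | F x = 0}.ncard ∧
          ∀ x ∈ Ω, Fhat x = 0 →
            ∃ L : EuclideanSpace ℝ (Fin d) ≃L[ℝ] EuclideanSpace ℝ (Fin d),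
              HasFDerivAt Fhat (L : EuclideanSpace ℝ (Fin d) →L[ℝ] EuclideanSpace ℝ (Fin d)) x) := by
  rcases subsingleton_or_nontrivial (EuclideanSpace ℝ (Fin d)) with hss | hnt
  · -- trivial case: the space is a single point
    refine ⟨1, one_pos, fun Fhat _ _ => ?_⟩
    have hz : ∀ x : EuclideanSpace ℝ (Fin d), x = 0 := fun x => Subsingleton.elim _ _
    have h1 : {x ∈ Ω | Fhat x = 0} = Ω := by ext x; simp [hz (Fhat x)]
    have h2 : {x ∈ Ω | F x = 0} = Ω := by ext x; simp [hz (F x)]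
    haveI : Finite (EuclideanSpace ℝ (Fin d)) := Finite.of_subsingleton
    refine ⟨by rw [h1]; exact Set.toFinite Ω, by rw [h1, h2], ?_⟩
    intro x hx _
    refine ⟨ContinuousLinearEquiv.refl ℝ _, ?_⟩
    have hFhat0 : Fhat = fun _ => (0 : EuclideanSpace ℝ (Fin d)) := funext fun y => hz _
    have h0 : ((ContinuousLinearEquiv.refl ℝ (EuclideanSpace ℝ (Fin d))) :
        EuclideanSpace ℝ (Fin d) →L[ℝ] EuclideanSpace ℝ (Fin d)) = 0 :=
      ContinuousLinearMap.ext fun v => Subsingleton.elim _ _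
    rw [hFhat0, h0]
    exact hasFDerivAt_const 0 x
  · rcases Set.eq_empty_or_nonempty Ω with hΩe | ⟨x₀, hx₀⟩
    · -- trivial case: Ω is empty
      refine ⟨1, one_pos, fun Fhat _ _ => ?_⟩
      simp [hΩe]
    -- main case
    set Z := {x ∈ Ω | F x = 0} with hZdef
    haveI : Finite ↥Z := hfin.to_subtype
    have hzd : ∀ z : ↥Z, ∃ L : EuclideanSpace ℝ (Fin d) ≃L[ℝ] EuclideanSpace ℝ (Fin d),
        HasFDerivAt F (L : EuclideanSpace ℝ (Fin d) →L[ℝ] EuclideanSpace ℝ (Fin d)) (z : EucSp d) :=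
      fun z => hnd z z.2.1 z.2.2
    choose L hL using hzd
    obtain ⟨δsep, hδsep, hsep⟩ := finite_sep hfin
    set N : ↥Z → ℝ≥0 := fun z =>
      ‖((L z).symm : EuclideanSpace ℝ (Fin d) →L[ℝ] EuclideanSpace ℝ (Fin d))‖₊ with hNdef
    have hNpos : ∀ z, 0 < N z := fun z => (L z).nnnorm_symm_pos
    have hNrpos : ∀ z, (0:ℝ) < ((N z : ℝ))⁻¹ := fun z => by
      have := hNpos z; positivity
    have hΩU : Ω ⊆ U := subset_closure.trans hclU
    have hfc : ContinuousOn (fderiv ℝ F) U := hF.continuousOn_fderiv_of_isOpen hU (by simp)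
    -- choose radii
    have hr : ∀ z : ↥Z, ∃ r : ℝ, 0 < r ∧ r ≤ δsep / 3 ∧ closedBall (z : EucSp d) r ⊆ Ω ∧
        ∀ y ∈ closedBall (z : EucSp d) r, ‖fderiv ℝ F y - (L z : EucSp d →L[ℝ] EucSp d)‖ ≤ ((N z : ℝ))⁻¹ / 4 := by
      intro z
      have hca : ContinuousAt (fderiv ℝ F) (z : EucSp d) := hfc.continuousAt (hU.mem_nhds (hΩU z.2.1))
      have hcont : ContinuousAt (fun y => ‖fderiv ℝ F y - (L z : EucSp d →L[ℝ] EucSp d)‖) (z : EucSp d) :=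
        (hca.sub continuousAt_const).norm
      have h0 : ‖fderiv ℝ F (z : EucSp d) - (L z : EucSp d →L[ℝ] EucSp d)‖ = 0 := by
        rw [(hL z).fderiv]; simp
      have hq : (0:ℝ) < ((N z : ℝ))⁻¹ / 4 := by have := hNrpos z; linarith
      have hmem : Iic (((N z : ℝ))⁻¹ / 4) ∈ nhds (‖fderiv ℝ F (z : EucSp d) - (L z : EucSp d →L[ℝ] EucSp d)‖) := by
        rw [h0]; exact Iic_mem_nhds hq
      have hnb : {y | ‖fderiv ℝ F y - (L z : EucSp d →L[ℝ] EucSp d)‖ ≤ ((N z : ℝ))⁻¹ / 4} ∈ nhds (z : EucSp d) :=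
        hcont hmem
      have hΩnb : Ω ∈ nhds (z : EucSp d) := hΩo.mem_nhds z.2.1
      obtain ⟨r', hr', hsub⟩ := (Metric.nhds_basis_closedBall.mem_iff).1 (Filter.inter_mem hΩnb hnb)
      refine ⟨min r' (δsep / 3), lt_min hr' (by linarith), min_le_right _ _, ?_, ?_⟩
      · exact fun y hy => (hsub (closedBall_subset_closedBall (min_le_left _ _) hy)).1
      · exact fun y hy => (hsub (closedBall_subset_closedBall (min_le_left _ _) hy)).2
    choose r hr0 hrsep hrΩ hrd using hr
    -- disjointness of the balls
    have hdisj : ∀ z z' : ↥Z, z ≠ z' → ∀ x, x ∈ closedBall (z : EucSp d) (r z) →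
        x ∉ closedBall (z' : EucSp d) (r z') := by
      intro z z' hne x hx hx'
      have hzz : (z : EuclideanSpace ℝ (Fin d)) ≠ (z' : EucSp d) := fun h => hne (Subtype.ext h)
      have h1 := hsep _ z.2 _ z'.2 hzz
      have h2 : dist (z : EuclideanSpace ℝ (Fin d)) (z' : EucSp d) ≤ r z + r z' := by
        calc dist (z : EuclideanSpace ℝ (Fin d)) (z' : EucSp d)
            ≤ dist (z : EuclideanSpace ℝ (Fin d)) x + dist x (z' : EucSp d) := dist_triangle _ _ _
          _ ≤ r z + r z' := add_le_add (by rw [dist_comm]; exact mem_closedBall.1 hx)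
              (mem_closedBall.1 hx')
      have := hrsep z; have := hrsep z'
      linarith
    -- the compact set away from the zeros, and the lower bound δ₀
    set K := closure Ω \ ⋃ z : ↥Z, ball (z : EucSp d) (r z) with hKdef
    have hKc : IsCompact K := (hΩb.isCompact_closure).diff (isOpen_iUnion fun z => isOpen_ball)
    have hKU : K ⊆ U := fun x hx => hclU hx.1
    have hFK : ∀ x ∈ K, F x ≠ 0 := by
      intro x hx h0
      by_cases hxΩ : x ∈ Ω
      · exact hx.2 (mem_iUnion.2 ⟨⟨x, ⟨hxΩ, h0⟩⟩, mem_ball_self (hr0 _)⟩)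
      · have hxf : x ∈ frontier Ω := by
          rw [frontier, hΩo.interior_eq]; exact ⟨hx.1, hxΩ⟩
        exact hbd x hxf h0
    have hδ₀ : ∃ δ₀ > 0, ∀ x ∈ K, δ₀ ≤ ‖F x‖ := by
      rcases K.eq_empty_or_nonempty with hK | hKne
      · exact ⟨1, one_pos, by simp [hK]⟩
      · obtain ⟨xm, hxmK, hmin⟩ := hKc.exists_isMinOn hKne ((hF.continuousOn.mono hKU).norm)
        exact ⟨‖F xm‖, norm_pos_iff.2 (hFK xm hxmK), fun x hx => hmin hx⟩
    obtain ⟨δ₀, hδ₀pos, hδ₀le⟩ := hδ₀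
    -- uniform lower bound η on the per-zero smallness thresholds
    have hη : ∃ η > 0, ∀ z : ↥Z, η ≤ min (((N z : ℝ))⁻¹ / 4) (((N z : ℝ))⁻¹ / 4 * r z) := by
      rcases isEmpty_or_nonempty ↥Z with hZe | hZne
      · exact ⟨1, one_pos, fun z => (IsEmpty.false z).elim⟩
      · obtain ⟨z₀, hz₀⟩ := Finite.exists_min
          (fun z : ↥Z => min (((N z : ℝ))⁻¹ / 4) (((N z : ℝ))⁻¹ / 4 * r z))
        refine ⟨_, lt_min (by have := hNrpos z₀; linarith)
          (by have := hNrpos z₀; have := hr0 z₀; positivity), hz₀⟩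
    obtain ⟨η, hη0, hηle⟩ := hη
    refine ⟨min δ₀ η, lt_min hδ₀pos hη0, ?_⟩
    rintro Fhat hFhat ⟨a, b, hab, ha, hb⟩
    have ha0 : 0 ≤ a := le_trans (norm_nonneg _) (ha x₀ hx₀)
    have hb0 : 0 ≤ b := le_trans (norm_nonneg _) (hb x₀ hx₀)
    have haε : a < min δ₀ η := by linarith
    have hbε : b < min δ₀ η := by linarith
    have haδ₀ : a < δ₀ := lt_of_lt_of_le haε (min_le_left _ _)
    have haη : a < η := lt_of_lt_of_le haε (min_le_right _ _)
    have hbη : b < η := lt_of_lt_of_le hbε (min_le_right _ _)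
    -- differentiability of Fhat on Ω
    have hFd : ∀ x ∈ Ω, HasFDerivAt Fhat (fderiv ℝ Fhat x) x := fun x hx =>
      ((hFhat.differentiableOn (by simp)).differentiableAt (hΩo.mem_nhds hx)).hasFDerivAt
    -- derivative bound on each ball
    have hdb : ∀ z : ↥Z, ∀ y ∈ closedBall (z : EucSp d) (r z),
        ‖fderiv ℝ Fhat y - (L z : EucSp d →L[ℝ] EucSp d)‖ ≤ b + ((N z : ℝ))⁻¹ / 4 := by
      intro z y hy
      have hyΩ := hrΩ z hy
      calc ‖fderiv ℝ Fhat y - (L z : EucSp d →L[ℝ] EucSp d)‖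
          = ‖(fderiv ℝ Fhat y - fderiv ℝ F y) + (fderiv ℝ F y - (L z : EucSp d →L[ℝ] EucSp d))‖ := by
            rw [sub_add_sub_cancel]
        _ ≤ ‖fderiv ℝ Fhat y - fderiv ℝ F y‖ + ‖fderiv ℝ F y - (L z : EucSp d →L[ℝ] EucSp d)‖ :=
            norm_add_le _ _
        _ ≤ b + ((N z : ℝ))⁻¹ / 4 := add_le_add (by rw [norm_sub_rev]; exact hb y hyΩ)
            (hrd z y hy)
    have hbN : ∀ z : ↥Z, b ≤ ((N z : ℝ))⁻¹ / 4 :=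
      fun z => le_trans (le_of_lt hbη) (le_trans (hηle z) (min_le_left _ _))
    have haN : ∀ z : ↥Z, a ≤ ((N z : ℝ))⁻¹ / 4 * r z :=
      fun z => le_trans (le_of_lt haη) (le_trans (hηle z) (min_le_right _ _))
    -- coercion of the nnreal constant
    have hκcoe : ∀ z : ↥Z, (((N z)⁻¹ / 2 : ℝ≥0) : ℝ) = ((N z : ℝ))⁻¹ / 2 := by
      intro z; push_cast; ring
    -- ApproximatesLinearOn
    have halo : ∀ z : ↥Z, ApproximatesLinearOn Fhat (L z : EucSp d →L[ℝ] EucSp d)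
        (closedBall (z : EucSp d) (r z)) ((N z)⁻¹ / 2) := by
      intro z x hx y hy
      have key := Convex.norm_image_sub_le_of_norm_hasFDerivWithin_le
        (f := fun w => Fhat w - (L z : EucSp d →L[ℝ] EucSp d) w)
        (f' := fun w => fderiv ℝ Fhat w - (L z : EucSp d →L[ℝ] EucSp d))
        (s := closedBall (z : EucSp d) (r z)) (C := ((N z : ℝ))⁻¹ / 2)
        (fun w hw => ((hFd w (hrΩ z hw)).sub ((L z : EucSp d →L[ℝ] EucSp d).hasFDerivAt)).hasFDerivWithinAt)
        (fun w hw => le_trans (hdb z w hw) (by have := hbN z; linarith))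
        (convex_closedBall _ _) hy hx
      have heq : (fun w => Fhat w - (L z : EucSp d →L[ℝ] EucSp d) w) x
          - (fun w => Fhat w - (L z : EucSp d →L[ℝ] EucSp d) w) y
          = Fhat x - Fhat y - (L z : EucSp d →L[ℝ] EucSp d) (x - y) := by
        simp only [map_sub]; abel
      rw [heq] at key
      rw [hκcoe z]
      exact key
    have hκlt : ∀ z : ↥Z, (N z)⁻¹ / 2 < (N z)⁻¹ :=
      fun z => NNReal.half_lt_self (inv_ne_zero (hNpos z).ne')
    have hinja : ∀ z : ↥Z, InjOn Fhat (closedBall (z : EucSp d) (r z)) :=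
      fun z => (halo z).injOn (Or.inr (hκlt z))
    -- existence of a zero of Fhat in each ball
    have hex : ∀ z : ↥Z, ∃ x ∈ closedBall (z : EucSp d) (r z), Fhat x = 0 := by
      intro z
      have hsurj := (halo z).surjOn_closedBall_of_nonlinearRightInverse
        (L z).toNonlinearRightInverse (le_of_lt (hr0 z)) (subset_refl _)
      have hFhz : ‖Fhat (z : EucSp d)‖ ≤ a := by
        have h1 := ha (z : EucSp d) z.2.1
        rw [z.2.2, zero_sub, norm_neg] at h1
        exact h1
      have h0mem : (0 : EuclideanSpace ℝ (Fin d)) ∈ closedBall (Fhat (z : EucSp d))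
          (((((L z).toNonlinearRightInverse.nnnorm : ℝ))⁻¹ - (((N z)⁻¹ / 2 : ℝ≥0) : ℝ)) * (r z)) := by
        have hnn : ((L z).toNonlinearRightInverse.nnnorm : ℝ) = (N z : ℝ) := rfl
        rw [mem_closedBall, dist_zero_left, hnn, hκcoe z]
        calc ‖Fhat (z : EucSp d)‖ ≤ a := hFhz
          _ ≤ ((N z : ℝ))⁻¹ / 4 * r z := haN z
          _ ≤ (((N z : ℝ))⁻¹ - ((N z : ℝ))⁻¹ / 2) * r z := by
              nlinarith [hNrpos z, hr0 z]
      obtain ⟨x, hx, hx0⟩ := hsurj h0mem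
      exact ⟨x, hx, hx0⟩
    choose xh hxhmem hxh0 using hex
    -- every zero of Fhat lies in one of the balls
    have hcover : ∀ x ∈ Ω, Fhat x = 0 → ∃ z : ↥Z, x ∈ closedBall (z : EucSp d) (r z) := by
      intro x hx h0
      by_contra hc
      push_neg at hc
      have hxK : x ∈ K := by
        refine ⟨subset_closure hx, ?_⟩
        rw [mem_iUnion]
        rintro ⟨z, hz⟩
        exact hc z (ball_subset_closedBall hz)
      have h1 := hδ₀le x hxK
      have h2 : ‖F x‖ ≤ a := by
        have := ha x hx
        rwa [h0, sub_zero] at this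
      linarith
    -- the zero set of Fhat is exactly the set of the constructed zeros
    have hset : {x ∈ Ω | Fhat x = 0} = Set.range xh := by
      ext x
      constructor
      · rintro ⟨hx, h0⟩
        obtain ⟨z, hz⟩ := hcover x hx h0
        exact ⟨z, hinja z (hxhmem z) hz (by rw [hxh0 z, h0])⟩
      · rintro ⟨z, rfl⟩
        exact ⟨hrΩ z (hxhmem z), hxh0 z⟩
    have hxinj : Function.Injective xh := by
      intro z z' h
      by_contra hne
      exact hdisj z z' hne (xh z) (hxhmem z) (h ▸ hxhmem z')
    refine ⟨?_, ?_, ?_⟩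
    · rw [hset]; exact Set.finite_range xh
    · rw [hset, ← Set.image_univ, Set.ncard_image_of_injective _ hxinj, Set.ncard_univ,
        Nat.card_coe_set_eq]
    · intro x hx h0
      obtain ⟨z, hz⟩ := hcover x hx h0
      have hclose : ‖fderiv ℝ Fhat x - (L z : EucSp d →L[ℝ] EucSp d)‖
          < ‖((L z).symm : EucSp d →L[ℝ] EucSp d)‖⁻¹ := by
        have h1 := hdb z x hz
        have h2 := hbN z
        have h3 := hNrpos z
        have h4 : ‖((L z).symm : EucSp d →L[ℝ] EucSp d)‖ = (N z : ℝ) := rfl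
        rw [h4]
        linarith
      obtain ⟨L', hL'⟩ := exists_cle_of_close (L z) _ hclose
      exact ⟨L', hL' ▸ hFd x hx⟩
end

section
/- Consider the single-plane lens with two unit point masses at positions 1 and −1 (i.e., Einstein radii b_1 = b_2 = 1, positions ξ_1 = 1, ξ_2 = −1) and source w = 0. Then the lens equation z − (z − 1)/|z − 1|² − (z + 1)/|z + 1|² = 0 has exactly 5 solutions in ℂ \ {1, −1}, and every solution is nondegenerate. -/
/-!
Since `w / |w|² = 1 / conj w`, the lens map is `z ↦ z - g (conj z)` with
`g u = 1/(u - 1) + 1/(u + 1)` (`twoMassDeflection`) holomorphic. Clearing denominators, the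
lens equation becomes `z (conj z² - 1) = 2 conj z`, that is `x (x² + y² - 3) = 0` and
`y (x² + y² - 1) = 0`, with the five solutions `0, ±√3, ±i`. The real derivative of
`z ↦ z - g (conj z)` is `h ↦ h - c conj h` with `c = g' (conj z)`, which is invertible as soon as
`|c| ≠ 1`, since `h = c conj h` forces `|h| = |c| |h|`; at the five images `c` is `-2` or `0`.
-/

open Complex ComplexConjugate

lemma div_ofReal_norm_sq_eq_inv_conj (w : ℂ) : w / (‖w‖ : ℂ) ^ 2 = (conj w)⁻¹ := by
  rw [← ofReal_pow, ← normSq_eq_norm_sq, inv_def, conj_conj, normSq_conj, div_eq_mul_inv, ofReal_inv]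

lemma hasFDerivAt_sub_comp_conj {g : ℂ → ℂ} {g' z : ℂ} (hg : HasDerivAt g g' (conj z)) :
    HasFDerivAt (fun w => w - g (conj w))
      (ContinuousLinearMap.id ℝ ℂ - g' • (conjCLE : ℂ →L[ℝ] ℂ)) z := by
  have hcomp := (hg.hasFDerivAt.restrictScalars ℝ).comp z conjCLE.hasFDerivAt
  refine (hasFDerivAt_id z).sub (hcomp.congr_fderiv ?_)
  ext h
  simp [mul_comm]

lemma exists_continuousLinearEquiv_id_sub_smul_conj {c : ℂ} (hc : ‖c‖ ≠ 1) :
    ∃ L : ℂ ≃L[ℝ] ℂ, (L : ℂ →L[ℝ] ℂ) = ContinuousLinearMap.id ℝ ℂ - c • (conjCLE : ℂ →L[ℝ] ℂ) := by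
  set T := ContinuousLinearMap.id ℝ ℂ - c • (conjCLE : ℂ →L[ℝ] ℂ)
  have hT : Function.Injective T := by
    rw [injective_iff_map_eq_zero]
    intro h hh
    have hnorm : ‖h‖ = ‖c‖ * ‖h‖ := by
      have : h = c * conj h := by simpa [T, sub_eq_zero] using hh
      simpa using congrArg norm this
    by_contra h0
    exact hc (mul_eq_right₀ (norm_ne_zero_iff.mpr h0) |>.mp hnorm.symm)
  refine ⟨(LinearEquiv.ofInjectiveEndo (T : ℂ →ₗ[ℝ] ℂ) hT).toContinuousLinearEquiv, ?_⟩
  ext1 h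
  rfl

noncomputable def twoMassDeflection (u : ℂ) : ℂ := (u - 1)⁻¹ + (u + 1)⁻¹

lemma twoMassLens_eq_sub_twoMassDeflection_conj (z : ℂ) :
    z - (z - 1) / (‖z - 1‖ : ℂ) ^ 2 - (z + 1) / (‖z + 1‖ : ℂ) ^ 2
      = z - twoMassDeflection (conj z) := by
  simp only [div_ofReal_norm_sq_eq_inv_conj, map_sub, map_add, map_one, twoMassDeflection, sub_sub]

lemma sub_twoMassDeflection_conj_eq_zero_iff {z : ℂ} (h1 : z ≠ 1) (h2 : z ≠ -1) :
    z - twoMassDeflection (conj z) = 0 ↔ z * (conj z ^ 2 - 1) = 2 * conj z := by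
  have hc1 : conj z - 1 ≠ 0 := fun h => h1 (by simpa using congrArg conj (sub_eq_zero.mp h))
  have hc2 : conj z + 1 ≠ 0 := fun h =>
    h2 (by simpa using congrArg conj (eq_neg_of_add_eq_zero_left h))
  rw [twoMassDeflection, sub_eq_zero]
  field_simp
  constructor <;> intro h <;> linear_combination h

lemma mul_conj_sq_sub_one_eq_two_mul_conj_iff (z : ℂ) :
    z * (conj z ^ 2 - 1) = 2 * conj z ↔
      z.re * (z.re ^ 2 + z.im ^ 2 - 3) = 0 ∧ z.im * (z.re ^ 2 + z.im ^ 2 - 1) = 0 := by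
  rw [Complex.ext_iff]
  simp only [mul_re, mul_im, sub_re, sub_im, pow_two, conj_re, conj_im, one_re, one_im, re_ofNat,
    im_ofNat]
  constructor <;> rintro ⟨h1, h2⟩ <;> constructor <;> linarith

lemma hasDerivAt_twoMassDeflection {u : ℂ} (hu : u ^ 2 ≠ 1) :
    HasDerivAt twoMassDeflection (-2 * (u ^ 2 + 1) / (u ^ 2 - 1) ^ 2) u := by
  have h1 : u - 1 ≠ 0 := fun h => hu (by linear_combination (u + 1) * h)
  have h2 : u + 1 ≠ 0 := fun h => hu (by linear_combination (u - 1) * h)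
  refine ((((hasDerivAt_id u).sub_const 1).fun_inv h1).add
    (((hasDerivAt_id u).add_const 1).fun_inv h2)).congr_deriv ?_
  simp only [id]
  field_simp
  ring

lemma cubic_re_im_system_iff (z : ℂ) :
    z.re * (z.re ^ 2 + z.im ^ 2 - 3) = 0 ∧ z.im * (z.re ^ 2 + z.im ^ 2 - 1) = 0 ↔
      z ∈ ({0, (√3 : ℂ), -(√3 : ℂ), I, -I} : Set ℂ) := by
  have hs : √3 ^ 2 = 3 := Real.sq_sqrt (by norm_num)
  simp only [Set.mem_insert_iff, Set.mem_singleton_iff, Complex.ext_iff, zero_re, zero_im,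
    ofReal_re, ofReal_im, neg_re, neg_im, I_re, I_im, neg_zero]
  constructor
  · rintro ⟨hre, him⟩
    rcases mul_eq_zero.1 hre with hx | hx <;> rcases mul_eq_zero.1 him with hy | hy
    · exact .inl ⟨hx, hy⟩
    · have : z.im ^ 2 = 1 ^ 2 := by nlinarith
      rcases eq_or_eq_neg_of_sq_eq_sq _ _ this with h | h
      · exact .inr <| .inr <| .inr <| .inl ⟨hx, h⟩
      · exact .inr <| .inr <| .inr <| .inr ⟨hx, h⟩
    · have : z.re ^ 2 = √3 ^ 2 := by nlinarith
      rcases eq_or_eq_neg_of_sq_eq_sq _ _ this with h | h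
      · exact .inr <| .inl ⟨h, hy⟩
      · exact .inr <| .inr <| .inl ⟨h, hy⟩
    · linarith
  · rintro (⟨hx, hy⟩ | ⟨hx, hy⟩ | ⟨hx, hy⟩ | ⟨hx, hy⟩ | ⟨hx, hy⟩) <;>
      simp only [hx, hy, neg_sq, hs] <;> norm_num

lemma twoMassLens_solutions_eq :
    {z : ℂ | z ≠ 1 ∧ z ≠ -1 ∧ z - twoMassDeflection (conj z) = 0} =
      {0, (√3 : ℂ), -(√3 : ℂ), I, -I} := by
  ext z
  rw [← cubic_re_im_system_iff, ← mul_conj_sq_sub_one_eq_two_mul_conj_iff]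
  constructor
  · rintro ⟨h1, h2, h⟩
    exact (sub_twoMassDeflection_conj_eq_zero_iff h1 h2).1 h
  · intro h
    have h1 : z ≠ 1 := by rintro rfl; norm_num at h
    have h2 : z ≠ -1 := by rintro rfl; norm_num at h
    exact ⟨h1, h2, (sub_twoMassDeflection_conj_eq_zero_iff h1 h2).2 h⟩

lemma ncard_twoMassLens_solutions : ({0, (√3 : ℂ), -(√3 : ℂ), I, -I} : Set ℂ).ncard = 5 := by
  have hs : (0 : ℝ) < √3 := by positivity
  rw [Set.ncard_insert_of_notMem, Set.ncard_insert_of_notMem, Set.ncard_insert_of_notMem,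
    Set.ncard_pair] <;> norm_num [Complex.ext_iff, hs.ne, hs.ne', CharZero.eq_neg_self_iff]

lemma conj_sq_ne_one_and_norm_deflection_deriv_ne_one {z : ℂ}
    (hz : z ∈ ({0, (√3 : ℂ), -(√3 : ℂ), I, -I} : Set ℂ)) :
    conj z ^ 2 ≠ 1 ∧ ‖-2 * (conj z ^ 2 + 1) / (conj z ^ 2 - 1) ^ 2‖ ≠ 1 := by
  have hs : (√3 : ℂ) ^ 2 = 3 := by rw [← ofReal_pow, Real.sq_sqrt (by norm_num)]; norm_num
  simp only [Set.mem_insert_iff, Set.mem_singleton_iff] at hz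
  rcases hz with rfl | rfl | rfl | rfl | rfl <;> simp [hs] <;> norm_num

/-- The single-plane lens with two unit point masses at positions `1` and `-1`
and source `w = 0` produces exactly `5` lensed images, all nondegenerate. -/
theorem two_mass_lens_five_images :
    let f : ℂ → ℂ := fun z =>
      z - (z - 1) / (‖z - 1‖ : ℂ) ^ 2
        - (z + 1) / (‖z + 1‖ : ℂ) ^ 2
    let S : Set ℂ := {z : ℂ | z ≠ 1 ∧ z ≠ -1 ∧ f z = 0}
    S.Finite ∧ S.ncard = 5 ∧
      ∀ z ∈ S, ∃ L : ℂ ≃L[ℝ] ℂ, HasFDerivAt f (L : ℂ →L[ℝ] ℂ) z := by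
  intro f S
  have hf : f = fun z => z - twoMassDeflection (conj z) :=
    funext twoMassLens_eq_sub_twoMassDeflection_conj
  have hS : S = {0, (√3 : ℂ), -(√3 : ℂ), I, -I} := by
    simp only [S, hf]
    exact twoMassLens_solutions_eq
  refine ⟨hS ▸ Set.toFinite _, hS ▸ ncard_twoMassLens_solutions, fun z hz => ?_⟩
  obtain ⟨hu, hc⟩ := conj_sq_ne_one_and_norm_deflection_deriv_ne_one (hS ▸ hz)
  obtain ⟨L, hL⟩ := exists_continuousLinearEquiv_id_sub_smul_conj hc
  exact ⟨L, hf ▸ hL ▸ hasFDerivAt_sub_comp_conj (hasDerivAt_twoMassDeflection hu)⟩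
end

section
/- Consider the single-plane lens with three unit point masses at the cube roots of unity ζ_k = e^{2πik/3}, k = 0, 1, 2 (i.e., Einstein radii all equal to 1) and source w = 0. Then the lens equation z − Σ_{k=0}^{2} (z − ζ_k)/|z − ζ_k|² = 0 has exactly 10 solutions in ℂ \ {ζ_0, ζ_1, ζ_2}, and every solution is nondegenerate. -/
/-!
Writing `w = z̄`, each term `(z - ζ) / |z - ζ|²` equals `1 / (w - ζ̄)`; the conjugate masses are
again the cube roots of unity, so away from them the lens map is `z ↦ z - r(z̄)` with
`r(w) = 3w² / (w³ - 1)`. Conjugating `z (w³ - 1) = 3w²` and eliminating `w` leaves `z = 0` or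
`(z³ - 1)³ = (3z)³`, i.e. `z = u y` with `u³ = 1` and `y³ = 3y + 1`. This cubic has three real
roots, and `(u y)³ = y³` determines `y`, so there are `1 + 3 · 3 = 10` distinct images.
The real derivative of `z ↦ z - r(z̄)` is `h ↦ h - r'(w) h̄`, which is invertible iff
`|r'(w)| ≠ 1`; here `r'(0) = 0` and `r'(ū y) = -ū (y + 1) / y`, of modulus one only for
`y = -1/2`.
-/

namespace ThreeMassLens

open Complex ComplexConjugate Polynomial Topology

section Cubic

variable {K : Type*} [Field K] {s t a b c : K}

theorem add_add_eq_zero_of_cube_eq (hab : a ≠ b) (hac : a ≠ c) (hbc : b ≠ c)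
    (ha : a ^ 3 = s * a + t) (hb : b ^ 3 = s * b + t) (hc : c ^ 3 = s * c + t) :
    a + b + c = 0 := by
  have hab' : a ^ 2 + a * b + b ^ 2 = s :=
    mul_left_cancel₀ (sub_ne_zero.2 hab) (by linear_combination ha - hb)
  have hac' : a ^ 2 + a * c + c ^ 2 = s :=
    mul_left_cancel₀ (sub_ne_zero.2 hac) (by linear_combination ha - hc)
  exact mul_left_cancel₀ (sub_ne_zero.2 hbc) (by linear_combination hab' - hac')

theorem eq_or_eq_or_eq_of_cube_eq (hab : a ≠ b) (hac : a ≠ c) (hbc : b ≠ c)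
    (ha : a ^ 3 = s * a + t) (hb : b ^ 3 = s * b + t) (hc : c ^ 3 = s * c + t) {y : K}
    (hy : y ^ 3 = s * y + t) : y = a ∨ y = b ∨ y = c := by
  by_contra! hne
  have habc := add_add_eq_zero_of_cube_eq hab hac hbc ha hb hc
  have haby := add_add_eq_zero_of_cube_eq hab hne.1.symm hne.2.1.symm ha hb hy
  exact hne.2.2 (by linear_combination haby - habc)

theorem eq_and_eq_of_mul_eq_mul {u u' y y' : K} (hs : s ≠ 0) (ht : t ≠ 0)
    (hu : u ^ 3 = 1) (hu' : u' ^ 3 = 1) (hy : y ^ 3 = s * y + t) (hy' : y' ^ 3 = s * y' + t)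
    (h : u * y = u' * y') : u = u' ∧ y = y' := by
  have hyy' : y = y' := by
    refine mul_left_cancel₀ hs (add_right_cancel (b := t) ?_)
    rw [← hy, ← hy', ← one_mul (y ^ 3), ← hu, ← mul_pow, h, mul_pow, hu', one_mul]
  have hy0 : y ≠ 0 := by
    rintro rfl
    exact ht (by simpa using hy.symm)
  exact ⟨mul_right_cancel₀ hy0 (by rw [h, hyy']), hyy'⟩

theorem inv_sub_add_inv_sub_add_inv_sub {w : K} (h₁ : a + b + c = 0)
    (h₂ : a * b + b * c + c * a = 0) (h₃ : a * b * c = 1) (hw : w ^ 3 ≠ 1) :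
    (w - a)⁻¹ + (w - b)⁻¹ + (w - c)⁻¹ = 3 * w ^ 2 / (w ^ 3 - 1) := by
  have hprod : (w - a) * (w - b) * (w - c) = w ^ 3 - 1 := by
    linear_combination (-w ^ 2) * h₁ + w * h₂ - h₃
  have hne : (w - a) * (w - b) * (w - c) ≠ 0 := hprod ▸ sub_ne_zero.2 hw
  simp only [mul_ne_zero_iff] at hne
  obtain ⟨⟨ha, hb⟩, hc⟩ := hne
  rw [← hprod]
  field_simp
  linear_combination (-2 * w) * h₁ + h₂

end Cubic

theorem exists_three_real_roots : ∃ a b c : ℝ, a < b ∧ b < c ∧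
    ∀ y : ℂ, y ^ 3 = 3 * y + 1 ↔ y = a ∨ y = b ∨ y = c := by
  have hp : Continuous fun x : ℝ => x ^ 3 - 3 * x := by fun_prop
  obtain ⟨a, ⟨-, ha₁⟩, ha⟩ := intermediate_value_Ioo (by norm_num : (-2 : ℝ) ≤ -1)
    hp.continuousOn (show (1 : ℝ) ∈ Set.Ioo _ _ by norm_num)
  obtain ⟨b, ⟨hb₀, hb₁⟩, hb⟩ := intermediate_value_Ioo' (by norm_num : (-1 : ℝ) ≤ 0)
    hp.continuousOn (show (1 : ℝ) ∈ Set.Ioo _ _ by norm_num)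
  obtain ⟨c, ⟨hc₀, -⟩, hc⟩ := intermediate_value_Ioo (by norm_num : (0 : ℝ) ≤ 2)
    hp.continuousOn (show (1 : ℝ) ∈ Set.Ioo _ _ by norm_num)
  have hroot : ∀ x : ℝ, x ^ 3 - 3 * x = 1 → (x : ℂ) ^ 3 = 3 * x + 1 := fun x hx => by
    exact_mod_cast (by linarith : x ^ 3 = 3 * x + 1)
  refine ⟨a, b, c, by linarith, by linarith, fun y => ⟨fun hy => ?_, ?_⟩⟩
  · refine eq_or_eq_or_eq_of_cube_eq ?_ ?_ ?_ (hroot a ha) (hroot b hb) (hroot c hc) hy <;>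
      norm_cast <;> linarith
  · rintro (rfl | rfl | rfl)
    exacts [hroot a ha, hroot b hb, hroot c hc]

theorem exists_ofReal_eq_of_cube_eq {y : ℂ} (hy : y ^ 3 = 3 * y + 1) : ∃ x : ℝ, (x : ℂ) = y := by
  obtain ⟨a, b, c, -, -, hroots⟩ := exists_three_real_roots
  rcases (hroots y).1 hy with rfl | rfl | rfl <;> exact ⟨_, rfl⟩

theorem exists_finset_real_roots :
    ∃ Y : Finset ℝ, Y.card = 3 ∧ ∀ x : ℝ, x ∈ Y ↔ x ^ 3 = 3 * x + 1 := by
  obtain ⟨a, b, c, hab, hbc, hroots⟩ := exists_three_real_roots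
  refine ⟨{a, b, c}, Finset.card_eq_three.2 ⟨a, b, c, hab.ne, (hab.trans hbc).ne, hbc.ne, rfl⟩,
    fun x => ?_⟩
  have := hroots x
  norm_cast at this
  simp [this]

theorem conj_eq_sq_of_pow_three_eq_one {u : ℂ} (hu : u ^ 3 = 1) : conj u = u ^ 2 := by
  rw [← inv_eq_conj (norm_eq_one_of_pow_eq_one hu three_ne_zero)]
  exact inv_eq_of_mul_eq_one_right (by linear_combination hu)

theorem conj_pow_ne_one {z : ℂ} {n : ℕ} (h : z ^ n ≠ 1) : conj z ^ n ≠ 1 := by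
  rwa [← map_pow, map_ne_one_iff _ (RingHom.injective _)]

noncomputable def ζ (k : Fin 3) : ℂ := Complex.exp (2 * Real.pi * Complex.I * (k : ℕ) / 3)

noncomputable def lensMap (z : ℂ) : ℂ := z - ∑ k : Fin 3, (z - ζ k) / (‖z - ζ k‖ : ℂ) ^ 2

noncomputable def deflectionOfConj (w : ℂ) : ℂ := 3 * w ^ 2 / (w ^ 3 - 1)

theorem isPrimitiveRoot_ζ_one : IsPrimitiveRoot (ζ 1) 3 := by
  simpa [ζ] using isPrimitiveRoot_exp 3 three_ne_zero

theorem ζ_eq_pow (k : Fin 3) : ζ k = ζ 1 ^ (k : ℕ) := by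
  rw [ζ, ζ, ← Complex.exp_nat_mul]
  congr 1
  simp only [Fin.val_one, Nat.cast_one]
  ring

theorem ζ_vieta :
    ζ 0 + ζ 1 + ζ 2 = 0 ∧ ζ 0 * ζ 1 + ζ 1 * ζ 2 + ζ 2 * ζ 0 = 0 ∧ ζ 0 * ζ 1 * ζ 2 = 1 := by
  have hω3 := isPrimitiveRoot_ζ_one.pow_eq_one
  have hsum := isPrimitiveRoot_ζ_one.geom_sum_eq_zero (by norm_num)
  simp only [Finset.sum_range_succ, Finset.sum_range_zero] at hsum
  rw [ζ_eq_pow 0, ζ_eq_pow 2, Fin.val_zero, Fin.val_two, pow_zero]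
  exact ⟨by linear_combination hsum, by linear_combination hsum + hω3, by linear_combination hω3⟩

theorem forall_ne_ζ_iff {z : ℂ} : (∀ k, z ≠ ζ k) ↔ z ^ 3 ≠ 1 := by
  simp only [ne_eq, ← not_exists, not_iff_not]
  constructor
  · rintro ⟨k, rfl⟩
    rw [ζ_eq_pow, ← pow_mul, mul_comm, pow_mul, isPrimitiveRoot_ζ_one.pow_eq_one, one_pow]
  · intro hz
    obtain ⟨i, hi, rfl⟩ := isPrimitiveRoot_ζ_one.eq_pow_of_pow_eq_one hz
    exact ⟨⟨i, hi⟩, (ζ_eq_pow ⟨i, hi⟩).symm⟩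

theorem div_sq_norm_eq_inv_conj (w : ℂ) : w / (‖w‖ : ℂ) ^ 2 = (conj w)⁻¹ := by
  rw [inv_def, conj_conj, normSq_conj, normSq_eq_norm_sq, div_eq_mul_inv, ofReal_inv, ofReal_pow]

theorem lensMap_eq_of_pow_three_ne_one {z : ℂ} (hz : z ^ 3 ≠ 1) :
    lensMap z = z - deflectionOfConj (conj z) := by
  obtain ⟨h₁, h₂, h₃⟩ := ζ_vieta
  simp only [lensMap, div_sq_norm_eq_inv_conj, map_sub, Fin.sum_univ_three]
  rw [inv_sub_add_inv_sub_add_inv_sub _ _ _ (conj_pow_ne_one hz), deflectionOfConj]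
  · simpa only [map_add, map_zero] using congrArg conj h₁
  · simpa only [map_add, map_mul, map_zero] using congrArg conj h₂
  · simpa only [map_mul, map_one] using congrArg conj h₃

theorem eq_zero_or_exists_of_eq_deflectionOfConj {z : ℂ} (hz : z ^ 3 ≠ 1)
    (h : z = deflectionOfConj (conj z)) :
    z = 0 ∨ ∃ u y : ℂ, u ^ 3 = 1 ∧ y ^ 3 = 3 * y + 1 ∧ u * y = z := by
  refine or_iff_not_imp_left.2 fun hz0 => ?_
  have hw : conj z ^ 3 - 1 ≠ 0 := sub_ne_zero.2 (conj_pow_ne_one hz)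
  have e₁ : z * (conj z ^ 3 - 1) = 3 * conj z ^ 2 := (eq_div_iff hw).1 h
  have e₂ : conj z * (z ^ 3 - 1) = 3 * z ^ 2 := by
    simpa [map_ofNat] using congrArg conj e₁
  have hcube : (z ^ 3 - 1) ^ 3 = (3 * z) ^ 3 := mul_left_cancel₀ hz0 <| by
    linear_combination (z * (conj z ^ 2 * (z ^ 3 - 1) ^ 2 + 3 * z ^ 2 * conj z * (z ^ 3 - 1)
      + 9 * z ^ 4) - 3 * (z ^ 3 - 1) * (conj z * (z ^ 3 - 1) + 3 * z ^ 2)) * e₂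
      - (z ^ 3 - 1) ^ 3 * e₁
  have h3z : 3 * z ≠ 0 := mul_ne_zero three_ne_zero hz0
  set v := (z ^ 3 - 1) / (3 * z)
  have hv : z ^ 3 - 1 = v * (3 * z) := (div_mul_cancel₀ _ h3z).symm
  have hv3 : v ^ 3 = 1 := mul_right_cancel₀ (pow_ne_zero 3 h3z) <| by
    rw [← mul_pow, ← hv, hcube, one_mul]
  exact ⟨v ^ 2, v * z, by linear_combination (v ^ 3 + 1) * hv3,
    by linear_combination z ^ 3 * hv3 + hv, by linear_combination z * hv3⟩

theorem eq_deflectionOfConj_of_eq_mul {u : ℂ} {x : ℝ} (hu : u ^ 3 = 1)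
    (hx : x ^ 3 = 3 * x + 1) :
    (u * x) ^ 3 ≠ 1 ∧ u * x = deflectionOfConj (conj (u * x)) := by
  have hx0 : (x : ℂ) ≠ 0 := ofReal_ne_zero.2 <| by
    rintro rfl
    norm_num at hx
  have hxC : (x : ℂ) ^ 3 = 3 * x + 1 := by exact_mod_cast hx
  have hux : (u * x) ^ 3 = 3 * x + 1 := by rw [mul_pow, hu, one_mul, hxC]
  refine ⟨fun h => hx0 ?_, ?_⟩
  · linear_combination (h - hux) / 3
  rw [map_mul, conj_ofReal, conj_eq_sq_of_pow_three_eq_one hu, deflectionOfConj,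
    eq_div_iff]
  · linear_combination (u * x ^ 4 * (u ^ 3 + 1) - 3 * u * x ^ 2) * hu + (u * x) * hxC
  · rw [mul_pow, ← pow_mul, pow_mul', hu, one_pow, one_mul, hxC, add_sub_cancel_right]
    exact mul_ne_zero three_ne_zero hx0

theorem lensMap_eq_zero_iff {z : ℂ} :
    ((∀ k, z ≠ ζ k) ∧ lensMap z = 0) ↔
      z = 0 ∨ ∃ u : ℂ, ∃ x : ℝ, u ^ 3 = 1 ∧ x ^ 3 = 3 * x + 1 ∧ u * x = z := by
  rw [forall_ne_ζ_iff]
  constructor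
  · rintro ⟨hz, h⟩
    rw [lensMap_eq_of_pow_three_ne_one hz, sub_eq_zero] at h
    refine (eq_zero_or_exists_of_eq_deflectionOfConj hz h).imp_right ?_
    rintro ⟨u, y, hu, hy, rfl⟩
    obtain ⟨x, rfl⟩ := exists_ofReal_eq_of_cube_eq hy
    exact ⟨u, x, hu, by exact_mod_cast hy, rfl⟩
  · rintro (rfl | ⟨u, x, hu, hx, rfl⟩)
    · simp [lensMap_eq_of_pow_three_ne_one, deflectionOfConj]
    · obtain ⟨hux, h⟩ := eq_deflectionOfConj_of_eq_mul hu hx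
      exact ⟨hux, by rw [lensMap_eq_of_pow_three_ne_one hux, ← h, sub_self]⟩

theorem exists_finset_card_eq_ten :
    ∃ T : Finset ℂ, T.card = 10 ∧ ↑T = {z | (∀ k, z ≠ ζ k) ∧ lensMap z = 0} := by
  obtain ⟨Y, hY3, hY⟩ := exists_finset_real_roots
  have hU (u : ℂ) : u ∈ nthRootsFinset 3 (1 : ℂ) ↔ u ^ 3 = 1 := mem_nthRootsFinset three_pos 1
  refine ⟨insert 0 ((nthRootsFinset 3 (1 : ℂ) ×ˢ Y).image fun p => p.1 * (p.2 : ℂ)), ?_, ?_⟩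
  · rw [Finset.card_insert_of_notMem, Finset.card_image_of_injOn, Finset.card_product, hY3,
      isPrimitiveRoot_ζ_one.card_nthRootsFinset]
    · rintro ⟨u, x⟩ hux ⟨u', x'⟩ hux' h
      simp only [Finset.coe_product, Set.mem_prod, Finset.mem_coe, hU, hY] at hux hux'
      obtain ⟨rfl, hxx'⟩ := eq_and_eq_of_mul_eq_mul (s := (3 : ℂ)) (t := 1) three_ne_zero
        one_ne_zero hux.1 hux'.1 (by exact_mod_cast hux.2) (by exact_mod_cast hux'.2) h
      exact Prod.ext rfl (ofReal_inj.1 hxx')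
    · simp only [Finset.mem_image, Finset.mem_product, hU, hY, Prod.exists, mul_eq_zero,
        ofReal_eq_zero, not_exists, not_and]
      rintro u x ⟨hu, hx⟩ (rfl | rfl)
      · norm_num at hu
      · norm_num at hx
  · ext z
    simp only [Finset.coe_insert, Finset.coe_image, Set.mem_insert_iff, Set.mem_image,
      Finset.mem_coe, Finset.mem_product, hU, hY, Prod.exists, and_assoc]
    exact lensMap_eq_zero_iff.symm

theorem hasFDerivAt_sub_comp_conj {G : ℂ → ℂ} {G' z : ℂ} (h : HasDerivAt G G' (conj z)) :
    HasFDerivAt (fun z => z - G (conj z))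
      (ContinuousLinearMap.id ℝ ℂ - G' • (conjCLE : ℂ →L[ℝ] ℂ)) z := by
  have hG := (h.hasFDerivAt.restrictScalars ℝ).comp z conjCLE.hasFDerivAt
  refine ((hasFDerivAt_id z).sub hG).congr_fderiv ?_
  ext1 w
  simp [mul_comm]

theorem exists_continuousLinearEquiv_eq_id_sub_smul_conj {c : ℂ} (hc : ‖c‖ ≠ 1) :
    ∃ L : ℂ ≃L[ℝ] ℂ,
      (L : ℂ →L[ℝ] ℂ) = ContinuousLinearMap.id ℝ ℂ - c • (conjCLE : ℂ →L[ℝ] ℂ) := by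
  set T := ContinuousLinearMap.id ℝ ℂ - c • (conjCLE : ℂ →L[ℝ] ℂ)
  have hinj : Function.Injective (T : ℂ →ₗ[ℝ] ℂ) := by
    refine (injective_iff_map_eq_zero _).2 fun w hw => ?_
    have hw' : w = c * conj w := by simpa [T, sub_eq_zero] using hw
    have : ‖w‖ * (1 - ‖c‖) = 0 := by
      have := congrArg norm hw'
      rw [norm_mul, RCLike.norm_conj] at this
      linear_combination this
    exact norm_eq_zero.1 ((mul_eq_zero.1 this).resolve_right (sub_ne_zero.2 hc.symm))
  exact ⟨.ofBijective T (LinearMap.ker_eq_bot.2 hinj)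
    (LinearMap.range_eq_top.2 (LinearMap.injective_iff_surjective.1 hinj)),
    ContinuousLinearEquiv.coe_ofBijective _ _ _⟩

theorem exists_hasFDerivAt_sub_comp_conj_of_norm_ne_one {G : ℂ → ℂ} {G' z : ℂ}
    (h : HasDerivAt G G' (conj z)) (hG' : ‖G'‖ ≠ 1) :
    ∃ L : ℂ ≃L[ℝ] ℂ, HasFDerivAt (fun z => z - G (conj z)) (L : ℂ →L[ℝ] ℂ) z :=
  let ⟨L, hL⟩ := exists_continuousLinearEquiv_eq_id_sub_smul_conj hG'
  ⟨L, hL ▸ hasFDerivAt_sub_comp_conj h⟩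

theorem hasDerivAt_deflectionOfConj {w : ℂ} (hw : w ^ 3 ≠ 1) :
    HasDerivAt deflectionOfConj (-3 * w * (w ^ 3 + 2) / (w ^ 3 - 1) ^ 2) w := by
  have hw' : w ^ 3 - 1 ≠ 0 := sub_ne_zero.2 hw
  refine (((hasDerivAt_pow 2 w).const_mul 3).div ((hasDerivAt_pow 3 w).sub_const 1) hw').congr_deriv
    ?_
  congr 1
  norm_num
  ring

theorem norm_deriv_deflectionOfConj_ne_one {u : ℂ} {x : ℝ} (hu : u ^ 3 = 1)
    (hx : x ^ 3 = 3 * x + 1) :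
    ‖-3 * (u * x) * ((u * x) ^ 3 + 2) / ((u * x) ^ 3 - 1) ^ 2‖ ≠ 1 := by
  have hx0 : x ≠ 0 := by
    rintro rfl
    norm_num at hx
  have hx0' : (x : ℂ) ≠ 0 := ofReal_ne_zero.2 hx0
  have hux : (u * x) ^ 3 = ((3 * x + 1 : ℝ) : ℂ) := by
    rw [mul_pow, hu, one_mul, ← ofReal_pow, hx]
  have hderiv : -3 * (u * x) * ((u * x) ^ 3 + 2) / ((u * x) ^ 3 - 1) ^ 2 =
      u * ((-(x + 1) / x : ℝ) : ℂ) := by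
    rw [hux]
    push_cast
    field_simp
    ring
  rw [hderiv, norm_mul, norm_eq_one_of_pow_eq_one hu three_ne_zero, one_mul, norm_real,
    Real.norm_eq_abs, abs_div, abs_neg, Ne, div_eq_one_iff_eq (abs_ne_zero.2 hx0)]
  intro h
  have hsq : (x + 1) ^ 2 = x ^ 2 := by rw [← sq_abs, h, sq_abs]
  have : x = -1 / 2 := by linarith
  subst this
  norm_num at hx

theorem exists_hasFDerivAt_lensMap {z : ℂ}
    (hz : z = 0 ∨ ∃ u : ℂ, ∃ x : ℝ, u ^ 3 = 1 ∧ x ^ 3 = 3 * x + 1 ∧ u * x = z) :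
    ∃ L : ℂ ≃L[ℝ] ℂ, HasFDerivAt lensMap (L : ℂ →L[ℝ] ℂ) z := by
  have hz3 : z ^ 3 ≠ 1 := forall_ne_ζ_iff.1 (lensMap_eq_zero_iff.2 hz).1
  have hnear : lensMap =ᶠ[𝓝 z] fun y => y - deflectionOfConj (conj y) := by
    filter_upwards [(continuous_pow 3).continuousAt.eventually_ne hz3] with y hy
    exact lensMap_eq_of_pow_three_ne_one hy
  have hderiv : ‖-3 * conj z * (conj z ^ 3 + 2) / (conj z ^ 3 - 1) ^ 2‖ ≠ 1 := by
    rcases hz with rfl | ⟨u, x, hu, hx, rfl⟩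
    · simp
    · rw [map_mul, conj_ofReal]
      exact norm_deriv_deflectionOfConj_ne_one (by rw [← map_pow, hu, map_one]) hx
  obtain ⟨L, hL⟩ := exists_hasFDerivAt_sub_comp_conj_of_norm_ne_one
    (hasDerivAt_deflectionOfConj (conj_pow_ne_one hz3)) hderiv
  exact ⟨L, hL.congr_of_eventuallyEq hnear⟩

end ThreeMassLens

/-- The single-plane lens with three unit point masses at the cube roots of unity
and source `w = 0` produces exactly `10` lensed images, all nondegenerate. -/
theorem three_mass_lens_ten_images :
    let ζ : Fin 3 → ℂ := fun k => Complex.exp (2 * Real.pi * Complex.I * (k : ℕ) / 3)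
    let f : ℂ → ℂ := fun z =>
      z - ∑ k : Fin 3, (z - ζ k) / (‖z - ζ k‖ : ℂ) ^ 2
    let S : Set ℂ := {z : ℂ | (∀ k, z ≠ ζ k) ∧ f z = 0}
    S.Finite ∧ S.ncard = 10 ∧
      ∀ z ∈ S, ∃ L : ℂ ≃L[ℝ] ℂ, HasFDerivAt f (L : ℂ →L[ℝ] ℂ) z := by
  intro ζ f S
  obtain ⟨T, hT, hTS⟩ := ThreeMassLens.exists_finset_card_eq_ten
  have hS : S = T := hTS.symm
  refine ⟨hS ▸ T.finite_toSet, by rw [hS, Set.ncard_coe_finset, hT], fun z hz => ?_⟩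
  exact ThreeMassLens.exists_hasFDerivAt_lensMap (ThreeMassLens.lensMap_eq_zero_iff.1 hz)
end
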